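/- arXiv:1201.6425 — 2 statements merged into one kernel-verified Lean document; each statement's English description precedes it below -/
import Mathlib

section
/- Let $P_1$ and $P_2$ be probability distributions on a finite set $\mathcal{Y}$ with $P_1 \ne P_2$, and for $\alpha \in [0,1]$ let $Q_\alpha(y) = \alpha P_1(y) + (1-\alpha) P_2(y)$ and $I(\alpha) = \sum_{y \in \mathcal{Y}} \big[ \alpha P_1(y) \log\frac{P_1(y)}{Q_\alpha(y)} + (1-\alpha) P_2(y) \log\frac{P_2(y)}{Q_\alpha(y)} \big]$. Let $\rho \in [0, 1/e]$. Then the maximum of $I(\alpha)$ over $\alpha \in [0, \rho]$ is attained uniquely at $\alpha^* = \rho$; that is, for every $\alpha \in [0, \rho)$ one has $I(\alpha) < I(\rho)$. -/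
/-!
`I` is concave: it is affine in `α` minus `∑ y, q log q` with `q = Q α y` affine in `α`. Hence
`I α ≤ I ρ + (α - ρ) I'(ρ)`, and `I'(ρ) = ∑ y, infoGap ρ (P₁ y) (P₂ y)`, so it suffices that this
sum is positive. For `ρ ≤ 1/e` every summand is nonnegative, and it is positive at a letter with
`P₁ y < P₂ y`, which exists because `P₁ ≠ P₂` have the same total mass. Indeed, for fixed `p₂ > 0`
the map `t ↦ infoGap ρ t p₂` vanishes at `t = p₂` and has derivative `-infoGapRate ρ (q / t)`, which
is negative for `t < p₂` and positive for `t > p₂`. The threshold `1/e` enters only in the second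
sign, as `infoGapRate ρ ρ = log ρ + 1 ≤ 0`.
-/

open Real Set

lemma mul_log_div_eq {a x y : ℝ} (h : a ≠ 0 → x ≠ 0 ∧ y ≠ 0) :
    a * log (x / y) = a * log x - a * log y := by
  rcases eq_or_ne a 0 with rfl | ha
  · simp
  · obtain ⟨hx, hy⟩ := h ha
    rw [log_div hx hy, mul_sub]

lemma mul_log_add_tangent_le {u v : ℝ} (hu : 0 ≤ u) (hv : 0 < v) :
    v * log v + (u - v) * (log v + 1) ≤ u * log u := by
  rcases hu.eq_or_lt with rfl | hu
  · linarith
  · have h := mul_le_mul_of_nonneg_left (log_le_sub_one_of_pos (div_pos hv hu)) hu.le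
    rw [log_div hv.ne' hu.ne', mul_sub_one, mul_div_cancel₀ _ hu.ne'] at h
    linarith

noncomputable def letterInfo (β p₁ p₂ : ℝ) : ℝ :=
  β * p₁ * log (p₁ / (β * p₁ + (1 - β) * p₂))
    + (1 - β) * p₂ * log (p₂ / (β * p₁ + (1 - β) * p₂))

/-- The summand of `I'(r) = D(P₁ ‖ Q_r) - D(P₂ ‖ Q_r)` at one letter. The `+ 1` sums to zero over
the letters and makes every summand nonnegative when `r ≤ 1/e`. -/
noncomputable def infoGap (r p₁ p₂ : ℝ) : ℝ :=
  p₁ * log p₁ - p₂ * log p₂ - (p₁ - p₂) * (log (r * p₁ + (1 - r) * p₂) + 1)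

section
variable {β r a p₁ p₂ : ℝ}

lemma letterInfo_eq (hβ₀ : 0 ≤ β) (hβ₁ : β ≤ 1) (hp₁ : 0 ≤ p₁) (hp₂ : 0 ≤ p₂) :
    letterInfo β p₁ p₂ = β * p₁ * log p₁ + (1 - β) * p₂ * log p₂
      - (β * p₁ + (1 - β) * p₂) * log (β * p₁ + (1 - β) * p₂) := by
  have h₁ : 0 ≤ β * p₁ := mul_nonneg hβ₀ hp₁
  have h₂ : 0 ≤ (1 - β) * p₂ := mul_nonneg (by linarith) hp₂
  rw [letterInfo, mul_log_div_eq, mul_log_div_eq]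
  · ring
  · exact fun h ↦ ⟨right_ne_zero_of_mul h, (lt_add_of_le_of_pos h₁ (h₂.lt_of_ne' h)).ne'⟩
  · exact fun h ↦ ⟨right_ne_zero_of_mul h, (lt_add_of_pos_of_le (h₁.lt_of_ne' h) h₂).ne'⟩

lemma letterInfo_le_add_mul_infoGap (ha₀ : 0 ≤ a) (ha₁ : a ≤ 1) (hr₀ : 0 < r) (hr₁ : r < 1)
    (hp₁ : 0 ≤ p₁) (hp₂ : 0 ≤ p₂) :
    letterInfo a p₁ p₂ ≤ letterInfo r p₁ p₂ + (a - r) * infoGap r p₁ p₂ := by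
  have hq : 0 ≤ r * p₁ + (1 - r) * p₂ := by
    have := sub_pos.2 hr₁
    positivity
  rcases hq.eq_or_lt with hq | hq
  · obtain ⟨h₁, h₂⟩ := (add_eq_zero_iff_of_nonneg (by positivity) (by nlinarith)).1 hq.symm
    obtain rfl : p₁ = 0 := (mul_eq_zero.1 h₁).resolve_left hr₀.ne'
    obtain rfl : p₂ = 0 := (mul_eq_zero.1 h₂).resolve_left (sub_pos.2 hr₁).ne'
    simp [letterInfo, infoGap]
  rw [letterInfo_eq ha₀ ha₁ hp₁ hp₂, letterInfo_eq hr₀.le hr₁.le hp₁ hp₂, infoGap]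
  have hqa : 0 ≤ a * p₁ + (1 - a) * p₂ := by
    have := sub_nonneg.2 ha₁
    positivity
  linear_combination mul_log_add_tangent_le hqa hq
end

noncomputable def infoGapRate (r w : ℝ) : ℝ := log w + r * (1 - w) / ((1 - r) * w)

section
variable {r w : ℝ}

lemma infoGapRate_pos (hr : r < 1 / 2) (hw : 1 < w) : 0 < infoGapRate r w := by
  have hw₀ : 0 < w := by linarith
  have hr₁ : 1 - r ≠ 0 := by linarith
  have key : 1 - w⁻¹ + r * (1 - w) / ((1 - r) * w) = (1 - 2 * r) * (w - 1) / ((1 - r) * w) := by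
    field_simp
    ring
  have : 0 < (1 - 2 * r) * (w - 1) / ((1 - r) * w) :=
    div_pos (mul_pos (by linarith) (by linarith)) (mul_pos (by linarith) hw₀)
  unfold infoGapRate
  linarith [one_sub_inv_le_log_of_pos hw₀]

lemma infoGapRate_neg (hr₀ : 0 < r) (hr : log r ≤ -1) (hrw : r < w) (hw : w < 1) :
    infoGapRate r w < 0 := by
  have hw₀ : 0 < w := hr₀.trans hrw
  have hr₁ : 0 < 1 - r := by linarith
  -- `infoGapRate r` decreases up to `w = r / (1 - r)` and increases after it; it is
  -- `log r + 1 ≤ 0` at `w = r` and `0` at `w = 1`. The two cases get the sign on each piece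
  -- without calculus.
  unfold infoGapRate
  rcases le_or_gt r ((1 - r) * w) with hc | hc
  · have key : w - 1 + r * (1 - w) / ((1 - r) * w)
        = (1 - w) * (r - (1 - r) * w) / ((1 - r) * w) := by
      field_simp
      ring
    have : (1 - w) * (r - (1 - r) * w) / ((1 - r) * w) ≤ 0 :=
      div_nonpos_of_nonpos_of_nonneg (mul_nonpos_of_nonneg_of_nonpos (by linarith) (by linarith))
        (by positivity)
    linarith [log_lt_sub_one_of_pos hw₀ hw.ne]
  · have key : w / r - 2 + r * (1 - w) / ((1 - r) * w)
        = (w - r) * ((1 - r) * w - r) / (r * (1 - r) * w) := by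
      field_simp
      ring
    have : (w - r) * ((1 - r) * w - r) / (r * (1 - r) * w) ≤ 0 :=
      div_nonpos_of_nonpos_of_nonneg (mul_nonpos_of_nonneg_of_nonpos (by linarith) (by linarith))
        (by positivity)
    have hlog : log w < log r + (w / r - 1) := by
      have h := log_lt_sub_one_of_pos (div_pos hw₀ hr₀) (by
        rw [Ne, div_eq_one_iff_eq hr₀.ne']; exact hrw.ne')
      rw [log_div hw₀.ne' hr₀.ne'] at h
      linarith
    linarith
end

section
variable {r p₂ t : ℝ}

lemma hasDerivAt_infoGap (hr₀ : 0 ≤ r) (hr₁ : r < 1) (hp₂ : 0 < p₂) (ht : 0 < t) :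
    HasDerivAt (fun s ↦ infoGap r s p₂) (-infoGapRate r ((r * t + (1 - r) * p₂) / t)) t := by
  have hv : 0 < r * t + (1 - r) * p₂ := by
    have := sub_pos.2 hr₁
    positivity
  have hq : HasDerivAt (fun s ↦ r * s + (1 - r) * p₂) r t := by
    simpa using ((hasDerivAt_id t).const_mul r).add_const ((1 - r) * p₂)
  have h : HasDerivAt (fun s ↦ infoGap r s p₂) (log t + 1 - (1 * (log (r * t + (1 - r) * p₂) + 1)
      + (t - p₂) * (r / (r * t + (1 - r) * p₂)))) t :=
    ((hasDerivAt_mul_log ht.ne').sub_const _).sub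
      (((hasDerivAt_id' t).sub_const p₂).mul ((hq.log hv.ne').add_const 1))
  refine h.congr_deriv ?_
  have : 1 - r ≠ 0 := by linarith
  rw [infoGapRate, log_div hv.ne' ht.ne']
  field_simp
  ring

lemma continuousOn_infoGap (hr₀ : 0 ≤ r) (hr₁ : r < 1) (hp₂ : 0 < p₂) :
    ContinuousOn (fun s ↦ infoGap r s p₂) (Ici 0) := by
  have hv : ∀ s ∈ Ici (0 : ℝ), r * s + (1 - r) * p₂ ≠ 0 := fun s hs ↦ by
    have := sub_pos.2 hr₁
    have : (0 : ℝ) ≤ s := hs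
    positivity
  exact (continuous_mul_log.continuousOn.sub continuousOn_const).sub
    ((continuousOn_id.sub continuousOn_const).mul ((ContinuousOn.log (by fun_prop) hv).add
      continuousOn_const))
end

section
variable {r p₁ p₂ : ℝ}

lemma infoGap_pos (hr₀ : 0 < r) (hr : log r ≤ -1) (hp₁ : 0 ≤ p₁) (hp₂ : 0 < p₂)
    (hne : p₁ ≠ p₂) : 0 < infoGap r p₁ p₂ := by
  have hr₁ : r < 1 / 2 := ((log_le_iff_le_exp hr₀).1 hr).trans_lt exp_neg_one_lt_half
  have hcont := continuousOn_infoGap hr₀.le (by linarith) hp₂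
  set G' : ℝ → ℝ := fun t ↦ -infoGapRate r ((r * t + (1 - r) * p₂) / t)
  have hderiv (t : ℝ) (ht : 0 < t) : HasDerivAt (fun s ↦ infoGap r s p₂) (G' t) t :=
    hasDerivAt_infoGap hr₀.le (by linarith) hp₂ ht
  have hzero : infoGap r p₂ p₂ = 0 := by simp [infoGap]
  rcases hne.lt_or_gt with hlt | hgt
  · have hanti : StrictAntiOn (fun s ↦ infoGap r s p₂) (Icc p₁ p₂) := by
      refine strictAntiOn_of_hasDerivWithinAt_neg (f' := G') (convex_Icc _ _)
        (hcont.mono fun s hs ↦ hp₁.trans hs.1) (fun t ht ↦ ?_) (fun t ht ↦ ?_)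
      · rw [interior_Icc] at ht
        exact (hderiv t (hp₁.trans_lt ht.1)).hasDerivWithinAt
      · rw [interior_Icc] at ht
        refine neg_neg_of_pos (infoGapRate_pos hr₁ ?_)
        rw [one_lt_div (hp₁.trans_lt ht.1)]
        nlinarith [ht.2]
    simpa [hzero] using hanti ⟨le_rfl, hlt.le⟩ ⟨hlt.le, le_rfl⟩ hlt
  · have hmono : StrictMonoOn (fun s ↦ infoGap r s p₂) (Icc p₂ p₁) := by
      refine strictMonoOn_of_hasDerivWithinAt_pos (f' := G') (convex_Icc _ _)
        (hcont.mono fun s hs ↦ hp₂.le.trans hs.1) (fun t ht ↦ ?_) (fun t ht ↦ ?_)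
      · rw [interior_Icc] at ht
        exact (hderiv t (hp₂.trans ht.1)).hasDerivWithinAt
      · rw [interior_Icc] at ht
        have ht₀ : 0 < t := hp₂.trans ht.1
        refine neg_pos_of_neg (infoGapRate_neg hr₀ hr ?_ ?_)
        · rw [lt_div_iff₀ ht₀]
          nlinarith [ht.1]
        · rw [div_lt_one ht₀]
          nlinarith [ht.1]
    simpa [hzero] using hmono ⟨le_rfl, hgt.le⟩ ⟨hgt.le, le_rfl⟩ hgt

lemma infoGap_nonneg (hr₀ : 0 < r) (hr : log r ≤ -1) (hp₁ : 0 ≤ p₁) (hp₂ : 0 ≤ p₂) :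
    0 ≤ infoGap r p₁ p₂ := by
  rcases hp₂.eq_or_lt with rfl | hp₂
  · rcases hp₁.eq_or_lt with rfl | hp₁
    · simp [infoGap]
    · have h : infoGap r p₁ 0 = -(p₁ * (log r + 1)) := by
        rw [infoGap, mul_zero, add_zero, log_mul hr₀.ne' hp₁.ne']
        ring
      rw [h]
      nlinarith
  · rcases eq_or_ne p₁ p₂ with rfl | hne
    · simp [infoGap]
    · exact (infoGap_pos hr₀ hr hp₁ hp₂ hne).le
end

lemma exists_lt_of_sum_eq_of_ne {ι : Type*} [Fintype ι] {f g : ι → ℝ}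
    (hsum : ∑ i, f i = ∑ i, g i) (hne : f ≠ g) : ∃ i, f i < g i := by
  by_contra! hle
  exact hne (funext fun i ↦
    ((Finset.sum_eq_sum_iff_of_le fun i _ ↦ hle i).1 hsum.symm i (Finset.mem_univ i)).symm)

/-- Cost-constrained binary input: for a binary-input channel with distinct rows
`P₁ ≠ P₂` and mutual information `I(α)`, if `ρ ∈ [0, 1/e]`, then the maximum of
`I` over `[0, ρ]` is attained uniquely at `ρ`: for every `α ∈ [0, ρ)`,
`I(α) < I(ρ)`. -/
theorem cost_constrained_max_at_rho {Y : Type*} [Fintype Y]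
    (P₁ P₂ : Y → ℝ)
    (hP₁ : ∀ y, 0 ≤ P₁ y) (hP₁sum : ∑ y, P₁ y = 1)
    (hP₂ : ∀ y, 0 ≤ P₂ y) (hP₂sum : ∑ y, P₂ y = 1)
    (hne : P₁ ≠ P₂)
    (Q : ℝ → Y → ℝ) (hQ : ∀ α y, Q α y = α * P₁ y + (1 - α) * P₂ y)
    (I : ℝ → ℝ)
    (hI : ∀ α, I α = ∑ y, (α * P₁ y * Real.log (P₁ y / Q α y)
      + (1 - α) * P₂ y * Real.log (P₂ y / Q α y)))
    (ρ : ℝ) (hρ : ρ ∈ Set.Icc (0 : ℝ) (Real.exp 1)⁻¹) :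
    ∀ α ∈ Set.Ico (0 : ℝ) ρ, I α < I ρ := by
  rintro α ⟨hα₀, hαρ⟩
  have hρ₀ : 0 < ρ := hα₀.trans_lt hαρ
  have hρe : ρ ≤ exp (-1) := by simpa [exp_neg] using hρ.2
  have hρ₁ : ρ < 1 := by linarith [exp_neg_one_lt_half]
  have hlogρ : log ρ ≤ -1 := (log_le_iff_le_exp hρ₀).2 hρe
  have hI' : ∀ β, I β = ∑ y, letterInfo β (P₁ y) (P₂ y) := fun β ↦ by simp only [hI, hQ, letterInfo]
  obtain ⟨y₀, hy₀⟩ := exists_lt_of_sum_eq_of_ne (hP₁sum.trans hP₂sum.symm) hne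
  have hgap : 0 < ∑ y, infoGap ρ (P₁ y) (P₂ y) :=
    Finset.sum_pos' (fun y _ ↦ infoGap_nonneg hρ₀ hlogρ (hP₁ y) (hP₂ y))
      ⟨y₀, Finset.mem_univ _, infoGap_pos hρ₀ hlogρ (hP₁ y₀) ((hP₁ y₀).trans_lt hy₀) hy₀.ne⟩
  calc I α = ∑ y, letterInfo α (P₁ y) (P₂ y) := hI' α
    _ ≤ ∑ y, (letterInfo ρ (P₁ y) (P₂ y) + (α - ρ) * infoGap ρ (P₁ y) (P₂ y)) :=
      Finset.sum_le_sum fun y _ ↦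
        letterInfo_le_add_mul_infoGap hα₀ (by linarith) hρ₀ hρ₁ (hP₁ y) (hP₂ y)
    _ = I ρ + (α - ρ) * ∑ y, infoGap ρ (P₁ y) (P₂ y) := by
      rw [Finset.sum_add_distrib, ← Finset.mul_sum, hI']
    _ < I ρ := add_lt_of_neg_right _ (mul_neg_of_neg_of_pos (by linarith) hgap)
end

section
/- Consider a discrete memoryless channel with finite input alphabet $\mathcal{X} = \{0, 1, \dots, m-1\}$, finite output alphabet $\mathcal{Y} = \{0, 1, \dots, n-1\}$, and transition probabilities $W(y|x)$. For an input distribution $P$ on $\mathcal{X}$, let $I(P) = \sum_{x \in \mathcal{X}} \sum_{y \in \mathcal{Y}} P(x) W(y|x) \log\frac{W(y|x)}{\sum_{x'} P(x') W(y|x')}$, and let $C = \max_P I(P)$ over all input distributions. If $C > 0$ and $P^*$ is an input distribution with $I(P^*) = C$, then $\max_{x \in \mathcal{X}} P^*(x) < 1 - \frac{1}{e}$. -/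
/-!
Let `p = P x₀ ≥ 1 - 1/e` and `s = 1 - p`, and write `P = p δ_{x₀} + s R`, so that the output
distribution is `Q = p A + s B` with `A = W x₀` and `B = R W`. Perturbing `P` towards `δ_{x₀}`
and towards `R` gives `D(A‖Q) ≤ C` and `∑ R x D(W x‖Q) ≤ C`; as `C` is the `(p, s)`-average of
these two numbers, both are equal to `C`, and by convexity `D(B‖Q) ≤ C = D(A‖Q)`.

Writing both divergences as `∑ Q y klFun (· / Q y)`, this compares `klFun a` with `klFun b` for
ratios satisfying `(1 - s) a + s b = 1`. A one-variable argument shows `klFun a ≤ klFun b`, with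
equality only for `a ∈ {0, 1}`; the threshold `s ≤ 1/e` is exactly `klFun 0 ≤ klFun (1/s)`.
Hence `A = Q` wherever `A > 0`, so `C = D(A‖Q) = 0`.
-/

open Real InformationTheory Set Filter Topology

/-- For `a = 1 - s * t` and `b = 1 + (1 - s) * t` one has `(1 - s) * a + s * b = 1`, and every
such pair with `s ≠ 0` arises this way. -/
noncomputable def klGap (s t : ℝ) : ℝ := klFun (1 + (1 - s) * t) - klFun (1 - s * t)

noncomputable def klGapDeriv (s t : ℝ) : ℝ := (1 - s) * log (1 + (1 - s) * t) + s * log (1 - s * t)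

lemma klGap_zero (s : ℝ) : klGap s 0 = 0 := by simp [klGap, klFun_one]

lemma continuous_klGap (s : ℝ) : Continuous (klGap s) := by
  unfold klGap
  exact (continuous_klFun.comp (by fun_prop)).sub (continuous_klFun.comp (by fun_prop))

lemma hasDerivAt_klGap {s t : ℝ} (h₁ : 1 + (1 - s) * t ≠ 0) (h₂ : 1 - s * t ≠ 0) :
    HasDerivAt (klGap s) (klGapDeriv s t) t := by
  have d₁ := (hasDerivAt_klFun h₁).comp t (((hasDerivAt_id t).const_mul (1 - s)).const_add 1)
  have d₂ := (hasDerivAt_klFun h₂).comp t (((hasDerivAt_id t).const_mul s).const_sub 1)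
  exact (d₁.sub d₂).congr_deriv (by simp only [klGapDeriv]; ring)

lemma one_le_klFun_inv {s : ℝ} (hs : 0 < s) (hse : s ≤ exp (-1)) : 1 ≤ klFun s⁻¹ := by
  have hlog : log s ≤ -1 := (log_le_iff_le_exp hs).2 hse
  have h : klFun s⁻¹ - 1 = s⁻¹ * (-log s - 1) := by
    rw [klFun_apply, log_inv]; ring
  rw [← sub_nonneg, h]
  exact mul_nonneg (inv_pos.2 hs).le (by linarith)

lemma klGap_inv_nonneg {s : ℝ} (hs : 0 < s) (hse : s ≤ exp (-1)) : 0 ≤ klGap s s⁻¹ := by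
  have h₁ : 1 + (1 - s) * s⁻¹ = s⁻¹ := by field_simp; ring
  rw [klGap, h₁, mul_inv_cancel₀ hs.ne', sub_self, klFun_zero, sub_nonneg]
  exact one_le_klFun_inv hs hse

lemma klGap_pos_of_neg {s t : ℝ} (hs : 0 < s) (hs2 : s ≤ 1 / 2) (ht : t < 0)
    (hb : 0 ≤ 1 + (1 - s) * t) : 0 < klGap s t := by
  have hanti : StrictAntiOn (klGap s) (Icc t 0) := by
    refine strictAntiOn_of_hasDerivWithinAt_neg (convex_Icc t 0) (continuous_klGap s).continuousOn
      (f' := klGapDeriv s) (fun τ hτ => ?_) (fun τ hτ => ?_)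
    all_goals rw [interior_Icc] at hτ
    all_goals have h₁ : 0 < 1 + (1 - s) * τ := by nlinarith [hτ.1]
    all_goals have h₂ : 0 < 1 - s * τ := by nlinarith [hτ.2]
    · exact (hasDerivAt_klGap h₁.ne' h₂.ne').hasDerivWithinAt
    · have e₁ := log_lt_sub_one_of_pos h₁ (by nlinarith [hτ.2])
      have e₂ := log_le_sub_one_of_pos h₂
      simp only [klGapDeriv]
      nlinarith [hτ.2]
  simpa [klGap_zero] using hanti ⟨le_rfl, ht.le⟩ ⟨ht.le, le_rfl⟩ ht

lemma strictConcaveOn_log_one_add_mul {c : ℝ} (hc : c ≠ 0) :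
    StrictConcaveOn ℝ {t | 0 < 1 + c * t} fun t => log (1 + c * t) := by
  refine ⟨fun x hx y hy a b ha hb hab => ?_, fun x hx y hy hxy a b ha hb hab => ?_⟩
  · have := convex_Ioi (0 : ℝ) (mem_Ioi.2 hx) (mem_Ioi.2 hy) ha hb hab
    simp only [mem_Ioi, smul_eq_mul] at this
    change 0 < 1 + c * (a * x + b * y)
    linear_combination this + hab
  · have hne : 1 + c * x ≠ 1 + c * y := by
      simpa [hc] using hxy
    have := strictConcaveOn_log_Ioi.2 hx hy hne ha hb hab
    simp only [smul_eq_mul] at this ⊢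
    convert this using 2
    linear_combination -hab

lemma strictConcaveOn_klGapDeriv {s : ℝ} (hs : 0 < s) (hs1 : s < 1) :
    StrictConcaveOn ℝ {t | 0 < 1 + (1 - s) * t ∧ 0 < 1 - s * t} (klGapDeriv s) := by
  have h₁ := strictConcaveOn_log_one_add_mul (c := 1 - s) (by linarith)
  have h₂ : StrictConcaveOn ℝ {t | 0 < 1 - s * t} fun t => log (1 - s * t) := by
    simpa only [neg_mul, ← sub_eq_add_neg] using
      strictConcaveOn_log_one_add_mul (c := -s) (neg_ne_zero.2 hs.ne')
  refine ⟨fun x hx y hy a b ha hb hab => ⟨h₁.1 hx.1 hy.1 ha hb hab, h₂.1 hx.2 hy.2 ha hb hab⟩,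
    fun x hx y hy hxy a b ha hb hab => ?_⟩
  have e₁ := h₁.2 hx.1 hy.1 hxy ha hb hab
  have e₂ := h₂.2 hx.2 hy.2 hxy ha hb hab
  simp only [klGapDeriv, smul_eq_mul] at e₁ e₂ ⊢
  linear_combination (1 - s) * e₁ + s * e₂

lemma klGap_pos_of_pos {s t : ℝ} (hs : 0 < s) (hse : s ≤ exp (-1)) (ht : 0 < t)
    (ha : 0 < 1 - s * t) : 0 < klGap s t := by
  have hs1 : s < 1 := by linarith [exp_neg_one_lt_half]
  have hlt : ∀ τ, τ < s⁻¹ ↔ s * τ < 1 := fun τ => by rw [← one_div, lt_div_iff₀' hs]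
  have hts : t < s⁻¹ := (hlt t).2 (by linarith)
  have hdom : ∀ τ ∈ Ico 0 s⁻¹, 0 < 1 + (1 - s) * τ ∧ 0 < 1 - s * τ := fun τ hτ =>
    ⟨by nlinarith [hτ.1], by linarith [(hlt τ).1 hτ.2]⟩
  have hderiv : ∀ τ ∈ Ico 0 s⁻¹, HasDerivAt (klGap s) (klGapDeriv s τ) τ := fun τ hτ =>
    hasDerivAt_klGap (hdom τ hτ).1.ne' (hdom τ hτ).2.ne'
  have hconc := strictConcaveOn_klGapDeriv hs hs1
  have hg0 : klGapDeriv s 0 = 0 := by simp [klGapDeriv]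
  have h0 := hdom 0 ⟨le_rfl, inv_pos.2 hs⟩
  -- `klGapDeriv s` is strictly concave and vanishes at `0`: it is positive on `(0, t)` if
  -- `klGapDeriv s t ≥ 0`, and negative on `(t, s⁻¹)` otherwise.
  rcases le_or_gt 0 (klGapDeriv s t) with hgt | hgt
  · have hmono : StrictMonoOn (klGap s) (Icc 0 t) := by
      refine strictMonoOn_of_hasDerivWithinAt_pos (convex_Icc 0 t)
        (continuous_klGap s).continuousOn (f' := klGapDeriv s) (fun τ hτ => ?_) (fun τ hτ => ?_)
      all_goals rw [interior_Icc] at hτ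
      · exact (hderiv τ ⟨hτ.1.le, hτ.2.trans hts⟩).hasDerivWithinAt
      · have := hconc.lt_on_openSegment h0 (hdom t ⟨ht.le, hts⟩) ht.ne
          (by rwa [openSegment_eq_Ioo ht])
        rwa [hg0, min_eq_left hgt] at this
    simpa [klGap_zero] using hmono ⟨le_rfl, ht.le⟩ ⟨ht.le, le_rfl⟩ ht
  · have hanti : StrictAntiOn (klGap s) (Icc t s⁻¹) := by
      refine strictAntiOn_of_hasDerivWithinAt_neg (convex_Icc t s⁻¹)
        (continuous_klGap s).continuousOn (f' := klGapDeriv s) (fun τ hτ => ?_) (fun τ hτ => ?_)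
      all_goals rw [interior_Icc] at hτ
      · exact (hderiv τ ⟨ht.le.trans hτ.1.le, hτ.2⟩).hasDerivWithinAt
      · have hτ0 : 0 < τ := ht.trans hτ.1
        have := hconc.lt_on_openSegment h0 (hdom τ ⟨hτ0.le, hτ.2⟩) hτ0.ne
          (by rw [openSegment_eq_Ioo hτ0]; exact ⟨ht, hτ.1⟩)
        rw [hg0] at this
        exact (min_lt_iff.1 (this.trans hgt)).resolve_left (lt_irrefl 0)
    exact (klGap_inv_nonneg hs hse).trans_lt (hanti ⟨le_rfl, hts.le⟩ ⟨hts.le, le_rfl⟩ hts)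

lemma klFun_lt_klFun_of_mix {s a b : ℝ} (hs : 0 < s) (hse : s ≤ exp (-1)) (ha : 0 < a)
    (ha1 : a ≠ 1) (hb : 0 ≤ b) (hab : (1 - s) * a + s * b = 1) : klFun a < klFun b := by
  obtain ⟨t, hst⟩ : ∃ t, s * t = 1 - a := ⟨(1 - a) / s, mul_div_cancel₀ _ hs.ne'⟩
  have hat : a = 1 - s * t := by linarith
  have hbt : b = 1 + (1 - s) * t :=
    mul_left_cancel₀ hs.ne' (by linear_combination hab - (1 - s) * hst)
  have ht : t ≠ 0 := by rintro rfl; exact ha1 (by linarith)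
  rw [← sub_pos, hat, hbt]
  rcases ht.lt_or_gt with ht | ht
  · exact klGap_pos_of_neg hs (hse.trans exp_neg_one_lt_half.le) ht (hbt ▸ hb)
  · exact klGap_pos_of_pos hs hse ht (hat ▸ ha)

lemma klFun_le_klFun_of_mix {s a b : ℝ} (hs : 0 < s) (hse : s ≤ exp (-1)) (ha : 0 ≤ a)
    (hb : 0 ≤ b) (hab : (1 - s) * a + s * b = 1) : klFun a ≤ klFun b := by
  rcases ha.eq_or_lt with rfl | ha
  · have : b = s⁻¹ := by field_simp; linarith
    rw [this, klFun_zero]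
    exact one_le_klFun_inv hs hse
  rcases eq_or_ne a 1 with rfl | ha1
  · have : b = 1 := by nlinarith
    rw [this]
  · exact (klFun_lt_klFun_of_mix hs hse ha ha1 hb hab).le

namespace DMC

variable {α β : Type*} [Fintype α]

noncomputable def output (W : α → β → ℝ) (P : α → ℝ) (y : β) : ℝ := ∑ x, P x * W x y

lemma mul_le_output {W : α → β → ℝ} {P : α → ℝ} (hW : ∀ x y, 0 ≤ W x y) (hP : ∀ x, 0 ≤ P x)
    (x : α) (y : β) : P x * W x y ≤ output W P y :=
  Finset.single_le_sum (f := fun x => P x * W x y) (fun x _ => mul_nonneg (hP x) (hW x y))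
    (Finset.mem_univ x)

lemma output_nonneg {W : α → β → ℝ} {P : α → ℝ} (hW : ∀ x y, 0 ≤ W x y) (hP : ∀ x, 0 ≤ P x)
    (y : β) : 0 ≤ output W P y :=
  Finset.sum_nonneg fun x _ => mul_nonneg (hP x) (hW x y)

lemma output_eq_zero_of_absolutelyContinuous {W : α → β → ℝ} {P P' : α → ℝ} (hW : ∀ x y, 0 ≤ W x y)
    (hP : ∀ x, 0 ≤ P x) (habs : ∀ x, P x = 0 → P' x = 0) {y : β} (hy : output W P y = 0) :
    output W P' y = 0 := by
  refine Finset.sum_eq_zero fun x _ => ?_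
  rcases mul_eq_zero.1 ((Finset.sum_eq_zero_iff_of_nonneg fun x _ =>
    mul_nonneg (hP x) (hW x y)).1 hy x (Finset.mem_univ x)) with h | h <;> simp [h, habs]

lemma output_smul_add_smul (W : α → β → ℝ) (P P' : α → ℝ) (a b : ℝ) :
    output W (a • P + b • P') = a • output W P + b • output W P' := by
  ext y
  simp [output, add_mul, Finset.sum_add_distrib, Finset.mul_sum, mul_assoc]

lemma output_single [DecidableEq α] (W : α → β → ℝ) (x : α) : output W (Pi.single x 1) = W x := by
  ext y
  simp [output, Pi.single_apply]

lemma eq_single_of_mem_stdSimplex [DecidableEq α] {P : α → ℝ} (hP : P ∈ stdSimplex ℝ α) {x₀ : α}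
    (hx₀ : P x₀ = 1) : P = Pi.single x₀ 1 := by
  ext x
  rcases eq_or_ne x x₀ with rfl | hx
  · simp [hx₀]
  · have : P x + P x₀ ≤ ∑ x, P x := by
      rw [← Finset.sum_pair hx]
      exact Finset.sum_le_sum_of_subset_of_nonneg (Finset.subset_univ _) fun x _ _ => hP.1 x
    simp only [Pi.single_apply, hx, if_false]
    linarith [hP.1 x, hP.2]

variable [Fintype β]

/-- Through `log 0 = 0`, the terms with `q y = 0` or `r y = 0` vanish, so this is the relative
entropy `D(q‖r)` whenever `r y = 0 → q y = 0`. -/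
noncomputable def kl (q r : β → ℝ) : ℝ := ∑ y, q y * log (q y / r y)

noncomputable def condKL (W : α → β → ℝ) (P : α → ℝ) (Q : β → ℝ) : ℝ := ∑ x, P x * kl (W x) Q

noncomputable def mutualInfo (W : α → β → ℝ) (P : α → ℝ) : ℝ := condKL W P (output W P)

lemma mutualInfo_eq_sum (W : α → β → ℝ) (P : α → ℝ) :
    mutualInfo W P = ∑ x, ∑ y, P x * W x y * log (W x y / ∑ x', P x' * W x' y) := by
  simp only [mutualInfo, condKL, kl, output, Finset.mul_sum, mul_assoc]

lemma kl_self (q : β → ℝ) : kl q q = 0 :=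
  Finset.sum_eq_zero fun y _ => by by_cases h : q y = 0 <;> simp [h]

lemma condKL_single [DecidableEq α] (W : α → β → ℝ) (x : α) (Q : β → ℝ) :
    condKL W (Pi.single x 1) Q = kl (W x) Q := by
  simp [condKL, Pi.single_apply]

lemma mutualInfo_single [DecidableEq α] (W : α → β → ℝ) (x : α) :
    mutualInfo W (Pi.single x 1) = 0 := by
  rw [mutualInfo, output_single, condKL_single, kl_self]

lemma output_mem_stdSimplex {W : α → β → ℝ} {P : α → ℝ} (hW : ∀ x, W x ∈ stdSimplex ℝ β)
    (hP : P ∈ stdSimplex ℝ α) : output W P ∈ stdSimplex ℝ β := by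
  refine ⟨output_nonneg (fun x => (hW x).1) hP.1, ?_⟩
  simp only [output]
  rw [Finset.sum_comm]
  simp [← Finset.mul_sum, (hW _).2, hP.2]

lemma condKL_smul_add_smul (W : α → β → ℝ) (P P' : α → ℝ) (Q : β → ℝ) (a b : ℝ) :
    condKL W (a • P + b • P') Q = a * condKL W P Q + b * condKL W P' Q := by
  simp [condKL, add_mul, Finset.sum_add_distrib, Finset.mul_sum, mul_assoc]

lemma kl_eq_sum_mul_klFun {q r : β → ℝ} (hqr : ∀ y, r y = 0 → q y = 0)
    (hsum : ∑ y, q y = ∑ y, r y) : kl q r = ∑ y, r y * klFun (q y / r y) := by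
  have key : ∀ y, r y * klFun (q y / r y) = q y * log (q y / r y) + (r y - q y) := by
    intro y
    rcases eq_or_ne (r y) 0 with h | h
    · simp [h, hqr y h]
    · rw [klFun_apply]; field_simp; ring
  rw [Finset.sum_congr rfl fun y _ => key y, Finset.sum_add_distrib, Finset.sum_sub_distrib, hsum,
    sub_self, add_zero, kl]

lemma kl_le_sum_sq_div {q r : β → ℝ} (hq : ∀ y, 0 ≤ q y) (hr : ∀ y, 0 ≤ r y)
    (hqr : ∀ y, r y = 0 → q y = 0) (hsum : ∑ y, q y = ∑ y, r y) :
    kl q r ≤ ∑ y, (q y - r y) ^ 2 / r y := by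
  have key : ∀ y, q y * log (q y / r y) ≤ (q y - r y) ^ 2 / r y + (q y - r y) := by
    intro y
    rcases (hq y).eq_or_lt with h | hqy
    · rcases eq_or_ne (r y) 0 with h' | h'
      · simp [← h, h']
      · simp [← h, sq, h']
    · have hry : 0 < r y := (hr y).lt_of_ne fun h => hqy.ne' (hqr y h.symm)
      have := mul_le_mul_of_nonneg_left (log_le_sub_one_of_pos (div_pos hqy hry)) hqy.le
      calc q y * log (q y / r y) ≤ q y * (q y / r y - 1) := this
        _ = _ := by field_simp; ring
  calc kl q r ≤ ∑ y, ((q y - r y) ^ 2 / r y + (q y - r y)) := Finset.sum_le_sum fun y _ => key y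
    _ = _ := by rw [Finset.sum_add_distrib, Finset.sum_sub_distrib, hsum, sub_self, add_zero]

lemma condKL_eq_mutualInfo_add_kl {W : α → β → ℝ} {P : α → ℝ} {Q : β → ℝ}
    (hW : ∀ x y, 0 ≤ W x y) (hP : ∀ x, 0 ≤ P x) (hQ : ∀ y, Q y = 0 → output W P y = 0) :
    condKL W P Q = mutualInfo W P + kl (output W P) Q := by
  have key : ∀ x y, P x * (W x y * log (W x y / Q y)) =
      P x * (W x y * log (W x y / output W P y)) + P x * W x y * log (output W P y / Q y) := by
    intro x y
    rcases eq_or_ne (P x * W x y) 0 with h | h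
    · rcases mul_eq_zero.1 h with h | h <;> simp [h]
    · have hpos : 0 < output W P y :=
        ((mul_nonneg (hP x) (hW x y)).lt_of_ne (Ne.symm h)).trans_le (mul_le_output hW hP x y)
      have hQy : Q y ≠ 0 := fun h0 => hpos.ne' (hQ y h0)
      have hWxy : W x y ≠ 0 := right_ne_zero_of_mul h
      rw [log_div hWxy hQy, log_div hWxy hpos.ne', log_div hpos.ne' hQy]
      ring
  simp only [mutualInfo, condKL, kl, Finset.mul_sum, key, Finset.sum_add_distrib]
  rw [Finset.sum_comm (f := fun x y => P x * W x y * log (output W P y / Q y))]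
  simp only [← Finset.sum_mul, output]

lemma condKL_le_mutualInfo_of_isMaxOn {W : α → β → ℝ} {P P' : α → ℝ}
    (hW : ∀ x, W x ∈ stdSimplex ℝ β) (hP : P ∈ stdSimplex ℝ α)
    (hmax : IsMaxOn (mutualInfo W) (stdSimplex ℝ α) P) (hP' : P' ∈ stdSimplex ℝ α)
    (habs : ∀ x, P x = 0 → P' x = 0) : condKL W P' (output W P) ≤ mutualInfo W P := by
  have hW0 : ∀ x y, 0 ≤ W x y := fun x => (hW x).1
  set Q := output W P
  set K := ∑ y, (output W P' y - Q y) ^ 2 / Q y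
  -- `mutualInfo W Pt = (1 - t) * mutualInfo W P + t * condKL W P' Q - kl (output W Pt) Q`,
  -- and the χ² bound gives `kl (output W Pt) Q ≤ t ^ 2 * K`.
  have key : ∀ t ∈ Ioo (0 : ℝ) 1, condKL W P' Q - mutualInfo W P ≤ t * K := by
    intro t ht
    set Pt : α → ℝ := (1 - t) • P + t • P'
    have hPt : Pt ∈ stdSimplex ℝ α :=
      convex_stdSimplex ℝ α hP hP' (by linarith [ht.2]) ht.1.le (by ring)
    have hout : output W Pt = (1 - t) • Q + t • output W P' := output_smul_add_smul W P P' _ _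
    have hcond : condKL W Pt Q = (1 - t) * mutualInfo W P + t * condKL W P' Q :=
      condKL_smul_add_smul W P P' Q _ _
    have hsupp : ∀ y, Q y = 0 → output W Pt y = 0 := fun y =>
      output_eq_zero_of_absolutelyContinuous hW0 hP.1 (fun x hx => by simp [Pt, hx, habs x hx])
    have hkl : kl (output W Pt) Q ≤ t ^ 2 * K := by
      calc kl (output W Pt) Q ≤ ∑ y, (output W Pt y - Q y) ^ 2 / Q y :=
            kl_le_sum_sq_div (output_nonneg hW0 hPt.1) (output_nonneg hW0 hP.1) hsupp
              (by rw [(output_mem_stdSimplex hW hPt).2, (output_mem_stdSimplex hW hP).2])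
        _ = t ^ 2 * K := by
          simp only [hout, K, Finset.mul_sum, Pi.add_apply, Pi.smul_apply, smul_eq_mul]
          exact Finset.sum_congr rfl fun y _ => by ring
    have hle : mutualInfo W Pt ≤ mutualInfo W P := hmax hPt
    rw [← sub_eq_of_eq_add (condKL_eq_mutualInfo_add_kl hW0 hPt.1 hsupp), hcond] at hle
    nlinarith [ht.1]
  have hlim : Tendsto (fun t => t * K) (𝓝[>] 0) (𝓝 0) := by
    have := (tendsto_id (x := 𝓝 (0 : ℝ))).mul_const K
    rw [zero_mul] at this
    exact this.mono_left nhdsWithin_le_nhds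
  have := ge_of_tendsto hlim <| by
    filter_upwards [Ioo_mem_nhdsGT zero_lt_one] with t ht using key t ht
  linarith

lemma convexOn_mul_log_div (c : ℝ) : ConvexOn ℝ (Ici 0) fun q => q * log (q / c) := by
  rcases eq_or_ne c 0 with rfl | hc
  · simpa using convexOn_const (0 : ℝ) (convex_Ici (0 : ℝ))
  · refine (convexOn_mul_log.add ((LinearMap.mulRight ℝ (-log c)).convexOn (convex_Ici 0))).congr
      fun q hq => ?_
    rcases (mem_Ici.1 hq).eq_or_lt with rfl | hq
    · simp
    · simp [log_div hq.ne' hc]; ring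

lemma kl_output_le_condKL {W : α → β → ℝ} {P : α → ℝ} (hW : ∀ x y, 0 ≤ W x y)
    (hP : P ∈ stdSimplex ℝ α) (Q : β → ℝ) : kl (output W P) Q ≤ condKL W P Q := by
  calc kl (output W P) Q
      = ∑ y, (fun q => q * log (q / Q y)) (∑ x, P x • W x y) := by simp [kl, output]
    _ ≤ ∑ y, ∑ x, P x • (W x y * log (W x y / Q y)) := Finset.sum_le_sum fun y _ =>
        (convexOn_mul_log_div (Q y)).map_sum_le (fun x _ => hP.1 x) hP.2 fun x _ => hW x y
    _ = condKL W P Q := by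
        rw [Finset.sum_comm]; simp [condKL, kl, Finset.mul_sum]

lemma kl_eq_zero_of_kl_mix_le {A B : β → ℝ} {s : ℝ} (hs : 0 < s) (hse : s ≤ exp (-1))
    (hA : A ∈ stdSimplex ℝ β) (hB : B ∈ stdSimplex ℝ β)
    (hle : kl B ((1 - s) • A + s • B) ≤ kl A ((1 - s) • A + s • B)) :
    kl A ((1 - s) • A + s • B) = 0 := by
  set Q := (1 - s) • A + s • B
  have hs1 : 0 < 1 - s := by linarith [exp_neg_one_lt_half]
  have hQ : ∀ y, Q y = (1 - s) * A y + s * B y := fun y => rfl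
  have hAQ : ∀ y, (1 - s) * A y ≤ Q y := fun y => by nlinarith [hQ y, hB.1 y]
  have hBQ : ∀ y, s * B y ≤ Q y := fun y => by nlinarith [hQ y, hA.1 y]
  have hQA : ∀ y, Q y = 0 → A y = 0 := fun y h => by nlinarith [hAQ y, hA.1 y]
  have hQB : ∀ y, Q y = 0 → B y = 0 := fun y h => by nlinarith [hBQ y, hB.1 y]
  have hQsum : ∑ y, Q y = 1 := by
    simp [hQ, Finset.sum_add_distrib, ← Finset.mul_sum, hA.2, hB.2]
  have hmix : ∀ y, Q y ≠ 0 → (1 - s) * (A y / Q y) + s * (B y / Q y) = 1 := fun y h => by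
    field_simp; linarith [hQ y]
  have hgap : ∀ y ∈ Finset.univ, 0 ≤ Q y * (klFun (B y / Q y) - klFun (A y / Q y)) := by
    intro y _
    rcases eq_or_ne (Q y) 0 with h | h
    · simp [h]
    · have hQy : 0 < Q y := (by nlinarith [hAQ y, hA.1 y, hB.1 y] : 0 ≤ Q y).lt_of_ne' h
      exact mul_nonneg hQy.le (sub_nonneg.2 (klFun_le_klFun_of_mix hs hse
        (div_nonneg (hA.1 y) hQy.le) (div_nonneg (hB.1 y) hQy.le) (hmix y h)))
  have hsum : ∑ y, Q y * (klFun (B y / Q y) - klFun (A y / Q y)) = kl B Q - kl A Q := by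
    rw [kl_eq_sum_mul_klFun hQB (by rw [hB.2, hQsum]),
      kl_eq_sum_mul_klFun hQA (by rw [hA.2, hQsum]), ← Finset.sum_sub_distrib]
    simp only [mul_sub]
  have hzero := (Finset.sum_eq_zero_iff_of_nonneg hgap).1
    (le_antisymm (by linarith) (Finset.sum_nonneg hgap))
  refine Finset.sum_eq_zero fun y _ => ?_
  rcases (hA.1 y).eq_or_lt with h | hAy
  · simp [← h]
  have hQy : 0 < Q y := by nlinarith [hAQ y]
  have hratio : A y / Q y = 1 := by
    by_contra hne
    have := klFun_lt_klFun_of_mix hs hse (div_pos hAy hQy) hne (div_nonneg (hB.1 y) hQy.le)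
      (hmix y hQy.ne')
    exact (mul_pos hQy (sub_pos.2 this)).ne' (hzero y (Finset.mem_univ y))
  simp [hratio]

theorem mutualInfo_eq_zero_of_isMaxOn [DecidableEq α] {W : α → β → ℝ} {P : α → ℝ}
    (hW : ∀ x, W x ∈ stdSimplex ℝ β) (hP : P ∈ stdSimplex ℝ α)
    (hmax : IsMaxOn (mutualInfo W) (stdSimplex ℝ α) P) {x₀ : α} (hx₀ : 1 - exp (-1) ≤ P x₀) :
    mutualInfo W P = 0 := by
  set s := 1 - P x₀
  have hp : 0 < P x₀ := by linarith [exp_neg_one_lt_half]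
  have hse : s ≤ exp (-1) := by linarith
  have hs0 : 0 ≤ s := sub_nonneg.2 (mem_Icc_of_mem_stdSimplex hP x₀).2
  rcases hs0.eq_or_lt with hs | hs
  · rw [eq_single_of_mem_stdSimplex hP (by linarith)]
    exact mutualInfo_single W x₀
  set R : α → ℝ := fun x => if x = x₀ then 0 else P x / s
  have hPR : P = (1 - s) • Pi.single x₀ 1 + s • R := by
    ext x
    rcases eq_or_ne x x₀ with rfl | hx
    · simp [R, s]
    · simp [R, hx]
      field_simp
  have hR : R ∈ stdSimplex ℝ α := by
    refine ⟨fun x => ?_, ?_⟩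
    · by_cases hx : x = x₀
      · simp [R, hx]
      · simpa [R, hx] using div_nonneg (hP.1 x) hs.le
    · have := congrArg (fun P : α → ℝ => ∑ x, P x) hPR
      simp only [Pi.add_apply, Pi.smul_apply, smul_eq_mul, Finset.sum_add_distrib,
        ← Finset.mul_sum, Finset.sum_pi_single', Finset.mem_univ, if_true, mul_one, hP.2] at this
      nlinarith
  have hRabs : ∀ x, P x = 0 → R x = 0 := fun x hx => by simp [R, hx]
  have hQ : output W P = (1 - s) • W x₀ + s • output W R := by
    conv_lhs => rw [hPR]
    rw [output_smul_add_smul, output_single]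
  have hC : mutualInfo W P = (1 - s) * kl (W x₀) (output W P) + s * condKL W R (output W P) := by
    conv_lhs => rw [mutualInfo, hPR]
    rw [condKL_smul_add_smul, condKL_single, ← hPR]
  have hu : kl (W x₀) (output W P) ≤ mutualInfo W P := by
    simpa [condKL_single] using condKL_le_mutualInfo_of_isMaxOn hW hP hmax
      (single_mem_stdSimplex ℝ x₀) fun x hx => by
        simp [show x ≠ x₀ from fun h => hp.ne' (h ▸ hx)]
  have hv := condKL_le_mutualInfo_of_isMaxOn hW hP hmax hR hRabs
  have hB := kl_output_le_condKL (fun x => (hW x).1) hR (output W P)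
  have hCu : mutualInfo W P ≤ kl (W x₀) (output W P) := by nlinarith
  have hkl := kl_eq_zero_of_kl_mix_le hs hse (hW x₀) (output_mem_stdSimplex hW hR)
    (by rw [← hQ]; linarith)
  rw [← hQ] at hkl
  linarith

end DMC

/-- Main theorem: for any DMC with finite input alphabet `Fin m`, finite output
alphabet `Fin n` and transition matrix `W`, any capacity achieving input
distribution `Pstar` of a channel with positive capacity satisfies
`Pstar x < 1 - 1/e` for every input symbol `x`. -/
theorem capacity_achieving_input_lt_one_sub_inv_e
    (m n : ℕ) (W : Fin m → Fin n → ℝ)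
    (hW : ∀ x y, 0 ≤ W x y) (hWsum : ∀ x, ∑ y, W x y = 1)
    (I : (Fin m → ℝ) → ℝ)
    (hI : ∀ P : Fin m → ℝ,
      I P = ∑ x, ∑ y, P x * W x y * Real.log (W x y / ∑ x', P x' * W x' y))
    (Pstar : Fin m → ℝ)
    (hPstar : ∀ x, 0 ≤ Pstar x) (hPstarSum : ∑ x, Pstar x = 1)
    (hmax : ∀ P : Fin m → ℝ, (∀ x, 0 ≤ P x) → ∑ x, P x = 1 → I P ≤ I Pstar)
    (hC : 0 < I Pstar) :
    ∀ x, Pstar x < 1 - (Real.exp 1)⁻¹ := by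
  obtain rfl : I = DMC.mutualInfo W :=
    funext fun P => (hI P).trans (DMC.mutualInfo_eq_sum W P).symm
  intro x₀
  by_contra! hx₀
  refine hC.ne' (DMC.mutualInfo_eq_zero_of_isMaxOn (fun x => ⟨hW x, hWsum x⟩) ⟨hPstar, hPstarSum⟩
    (fun P hP => hmax P hP.1 hP.2) (x₀ := x₀) ?_)
  rwa [exp_neg]
end
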